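/- Let F be a pricing function with marginal-rate function G, let f>0 be the unit trading fee, and let a,b,y^A,y^B > 0. If 1/(1+f) ≤ G(y^A/y^B)/(a/b) ≤ 1+f, then (D^A,D^B) = (0,0) is the unique optimal solution of the investor's problem: for every feasible (D^A,D^B) ≠ (0,0), the objective value a(1+f·1_{D^A<0})D^A + b(1+f·1_{D^B<0})D^B is strictly less than 0, which is the objective value at (0,0). -/

import Mathlib

/-!
The level curve of `F` through `(yA, yB)` lies strictly above its tangent line
`ℓ t = yB + G (yA / yB) * (yA - t)`: along that line `t ↦ F t (ℓ t)` has derivative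
`Fy * (G (t / ℓ t) - G (yA / yB))`, and as `G` is decreasing and `t / ℓ t` crosses `yA / yB` only
at `t = yA`, this function peaks at `yA`. So every feasible trade satisfies
`DB < -G (yA / yB) * DA`, and the two bounds on `G (yA / yB) / (a / b)` say that this exchange rate,
with the fee `1 + f` charged on the asset paid in, never yields a profit.
-/

open Set Filter Topology

/-- A pricing function `F` with partial derivatives `Fx`, `Fy` and marginal-rate
function `G` (with derivative `G'`), as in Assumption 1 (Pricing Formula):
(i) `F` is continuously differentiable with positive partial derivatives;
(ii) `Fx/Fy = G(x/y)` where `G` is continuously differentiable, strictly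
decreasing (negative derivative), with `G → ∞` at `0⁺` and `G → 0` at `∞`;
(iii) homogeneity of level sets. -/
structure PricingFunction (F Fx Fy : ℝ → ℝ → ℝ) (G G' : ℝ → ℝ) : Prop where
  partialX : ∀ x y : ℝ, 0 < x → 0 < y → HasDerivAt (fun t => F t y) (Fx x y) x
  partialY : ∀ x y : ℝ, 0 < x → 0 < y → HasDerivAt (fun t => F x t) (Fy x y) y
  contX : ContinuousOn (fun p : ℝ × ℝ => Fx p.1 p.2) (Ioi 0 ×ˢ Ioi 0)
  contY : ContinuousOn (fun p : ℝ × ℝ => Fy p.1 p.2) (Ioi 0 ×ˢ Ioi 0)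
  posX : ∀ x y : ℝ, 0 < x → 0 < y → 0 < Fx x y
  posY : ∀ x y : ℝ, 0 < x → 0 < y → 0 < Fy x y
  ratio : ∀ x y : ℝ, 0 < x → 0 < y → Fx x y / Fy x y = G (x / y)
  derivG : ∀ z : ℝ, 0 < z → HasDerivAt G (G' z) z
  contG' : ContinuousOn G' (Ioi 0)
  negG' : ∀ z : ℝ, 0 < z → G' z < 0
  tendstoG0 : Tendsto G (𝓝[>] (0:ℝ)) atTop
  tendstoGtop : Tendsto G atTop (𝓝 0)
  homog : ∀ x y x' y' c : ℝ, 0 < x → 0 < y → 0 < x' → 0 < y' → 0 < c →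
    F x y = F x' y' → F (c * x) (c * y) = F (c * x') (c * y')

/-- The investor's post-fee profit `a(1+f·1_{Dᴬ<0})Dᴬ + b(1+f·1_{Dᴮ<0})Dᴮ`. -/
noncomputable def objective (f a b DA DB : ℝ) : ℝ :=
  a * (if DA < 0 then 1 + f else 1) * DA + b * (if DB < 0 then 1 + f else 1) * DB

namespace PricingFunction

variable {F Fx Fy : ℝ → ℝ → ℝ} {G G' : ℝ → ℝ}

theorem hasDerivAt_comp (hF : PricingFunction F Fx Fy G G') {p q : ℝ → ℝ} {p' q' t : ℝ}
    (hp : HasDerivAt p p' t) (hq : HasDerivAt q q' t) (hpt : 0 < p t) (hqt : 0 < q t) :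
    HasDerivAt (fun s => F (p s) (q s))
      (Fx (p t) (q t) * p' + Fy (p t) (q t) * q') t := by
  have hquad : Ioi (0 : ℝ) ×ˢ Ioi 0 ∈ 𝓝 (p t, q t) :=
    (isOpen_Ioi.prod isOpen_Ioi).mem_nhds ⟨hpt, hqt⟩
  have hFxy := hasStrictFDerivAt_uncurry_coprod (f := F)
    (f₁ := fun x y => ContinuousLinearMap.toSpanSingleton ℝ (Fx x y))
    (f₂ := fun x y => ContinuousLinearMap.toSpanSingleton ℝ (Fy x y))
    (Filter.mem_of_superset hquad fun v hv => (hF.partialX _ _ hv.1 hv.2).hasFDerivAt)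
    (Filter.mem_of_superset hquad fun v hv => (hF.partialY _ _ hv.1 hv.2).hasFDerivAt)
    (ContinuousLinearMap.toSpanSingletonCLE.continuous.continuousAt.comp
      (hF.contX.continuousAt hquad))
    (ContinuousLinearMap.toSpanSingletonCLE.continuous.continuousAt.comp
      (hF.contY.continuousAt hquad))
  refine (hFxy.hasFDerivAt.comp_hasDerivAt t (hp.prodMk hq)).congr_deriv ?_
  simp [Function.HasUncurry.uncurry, mul_comm]

theorem hasDerivAt_along_line (hF : PricingFunction F Fx Fy G G') {x₀ y₀ g t : ℝ}
    (ht : 0 < t) (hℓ : 0 < y₀ + g * (x₀ - t)) :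
    HasDerivAt (fun s => F s (y₀ + g * (x₀ - s)))
      (Fy t (y₀ + g * (x₀ - t)) * (G (t / (y₀ + g * (x₀ - t))) - g)) t := by
  have hline : HasDerivAt (fun s => y₀ + g * (x₀ - s)) (-g) t := by
    simpa using ((hasDerivAt_id t).const_sub x₀).const_mul g |>.const_add y₀
  refine (hF.hasDerivAt_comp (hasDerivAt_id t) hline ht hℓ).congr_deriv ?_
  rw [← hF.ratio t _ ht hℓ, mul_sub (Fy _ _), mul_div_cancel₀ _ (hF.posY t _ ht hℓ).ne', id]
  ring

theorem strictAntiOn_G (hF : PricingFunction F Fx Fy G G') : StrictAntiOn G (Ioi 0) :=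
  strictAntiOn_of_deriv_neg (convex_Ioi 0)
    (fun z hz => (hF.derivG z hz).continuousAt.continuousWithinAt)
    (fun z hz => by
      rw [interior_Ioi] at hz
      rw [(hF.derivG z hz).deriv]
      exact hF.negG' z hz)

theorem G_pos (hF : PricingFunction F Fx Fy G G') {z : ℝ} (hz : 0 < z) : 0 < G z := by
  rw [← div_one z, ← hF.ratio z 1 hz one_pos]
  exact div_pos (hF.posX z 1 hz one_pos) (hF.posY z 1 hz one_pos)

theorem strictMonoOn_right (hF : PricingFunction F Fx Fy G G') {x : ℝ} (hx : 0 < x) :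
    StrictMonoOn (F x) (Ioi 0) :=
  strictMonoOn_of_deriv_pos (convex_Ioi 0)
    (fun y hy => (hF.partialY x y hx hy).continuousAt.continuousWithinAt)
    (fun y hy => by
      rw [interior_Ioi] at hy
      rw [(hF.partialY x y hx hy).deriv]
      exact hF.posY x y hx hy)

theorem lt_G_div_line (hF : PricingFunction F Fx Fy G G') {x₀ y₀ t : ℝ}
    (hx₀ : 0 < x₀) (hy₀ : 0 < y₀) (ht : 0 < t)
    (hℓ : 0 < y₀ + G (x₀ / y₀) * (x₀ - t))
    (hlt : t < x₀) :
    G (x₀ / y₀) < G (t / (y₀ + G (x₀ / y₀) * (x₀ - t))) := by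
  have hg := hF.G_pos (div_pos hx₀ hy₀)
  refine hF.strictAntiOn_G (div_pos ht hℓ) (div_pos hx₀ hy₀) ?_
  rw [div_lt_div_iff₀ hℓ hy₀]
  -- with `ℓ = y₀ + G (x₀ / y₀) * (x₀ - t)`: `x₀ * ℓ - t * y₀ = (x₀ - t) * (y₀ + G (x₀ / y₀) * x₀)`
  nlinarith [mul_pos (sub_pos.2 hlt) (by positivity : 0 < y₀ + G (x₀ / y₀) * x₀)]

theorem G_div_line_lt (hF : PricingFunction F Fx Fy G G') {x₀ y₀ t : ℝ}
    (hx₀ : 0 < x₀) (hy₀ : 0 < y₀) (ht : 0 < t)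
    (hℓ : 0 < y₀ + G (x₀ / y₀) * (x₀ - t))
    (hlt : x₀ < t) :
    G (t / (y₀ + G (x₀ / y₀) * (x₀ - t))) < G (x₀ / y₀) := by
  have hg := hF.G_pos (div_pos hx₀ hy₀)
  refine hF.strictAntiOn_G (div_pos hx₀ hy₀) (div_pos ht hℓ) ?_
  rw [div_lt_div_iff₀ hy₀ hℓ]
  nlinarith [mul_pos (sub_pos.2 hlt) (by positivity : 0 < y₀ + G (x₀ / y₀) * x₀)]

theorem apply_lt_of_tangent (hF : PricingFunction F Fx Fy G G') {yA yB x : ℝ}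
    (hyA : 0 < yA) (hyB : 0 < yB) (hx : 0 < x) (hne : x ≠ yA)
    (hℓx : 0 < yB + G (yA / yB) * (yA - x)) :
    F x (yB + G (yA / yB) * (yA - x)) < F yA yB := by
  set g := G (yA / yB)
  have hg : 0 < g := hF.G_pos (div_pos hyA hyB)
  set ℓ : ℝ → ℝ := fun t => yB + g * (yA - t) with hℓ_def
  have hφ : ∀ t, 0 < t → 0 < ℓ t →
      HasDerivAt (fun s => F s (ℓ s)) (Fy t (ℓ t) * (G (t / ℓ t) - g)) t :=
    fun t ht hℓt => hF.hasDerivAt_along_line ht hℓt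
  have hℓyA : ℓ yA = yB := by simp [hℓ_def]
  rcases hne.lt_or_gt with hlt | hgt
  · have hpos : ∀ t ∈ Icc x yA, 0 < t ∧ 0 < ℓ t := fun t ht =>
      ⟨hx.trans_le ht.1, by nlinarith [ht.2]⟩
    have hmono : StrictMonoOn (fun s => F s (ℓ s)) (Icc x yA) :=
      strictMonoOn_of_deriv_pos (convex_Icc x yA)
        (fun t ht => (hφ t (hpos t ht).1 (hpos t ht).2).continuousAt.continuousWithinAt)
        (fun t ht => by
          rw [interior_Icc] at ht
          obtain ⟨ht₀, hℓt⟩ := hpos t (Ioo_subset_Icc_self ht)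
          rw [(hφ t ht₀ hℓt).deriv]
          exact mul_pos (hF.posY t _ ht₀ hℓt)
            (sub_pos.2 (hF.lt_G_div_line hyA hyB ht₀ hℓt ht.2)))
    simpa [hℓyA] using hmono ⟨le_rfl, hlt.le⟩ ⟨hlt.le, le_rfl⟩ hlt
  · have hpos : ∀ t ∈ Icc yA x, 0 < t ∧ 0 < ℓ t := fun t ht =>
      ⟨hyA.trans_le ht.1, by nlinarith [ht.2]⟩
    have hanti : StrictAntiOn (fun s => F s (ℓ s)) (Icc yA x) :=
      strictAntiOn_of_deriv_neg (convex_Icc yA x)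
        (fun t ht => (hφ t (hpos t ht).1 (hpos t ht).2).continuousAt.continuousWithinAt)
        (fun t ht => by
          rw [interior_Icc] at ht
          obtain ⟨ht₀, hℓt⟩ := hpos t (Ioo_subset_Icc_self ht)
          rw [(hφ t ht₀ hℓt).deriv]
          exact mul_neg_of_pos_of_neg (hF.posY t _ ht₀ hℓt)
            (sub_neg.2 (hF.G_div_line_lt hyA hyB ht₀ hℓt ht.1)))
    simpa [hℓyA] using hanti ⟨le_rfl, hgt.le⟩ ⟨hgt.le, le_rfl⟩ hgt

theorem lt_of_apply_eq (hF : PricingFunction F Fx Fy G G') {yA yB x y : ℝ}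
    (hyA : 0 < yA) (hyB : 0 < yB) (hx : 0 < x) (hy : 0 < y) (hlevel : F x y = F yA yB)
    (hne : (x, y) ≠ (yA, yB)) :
    yB + G (yA / yB) * (yA - x) < y := by
  rcases eq_or_ne x yA with rfl | hxA
  · have hyyB : y = yB := (hF.strictMonoOn_right hx).injOn hy hyB hlevel
    exact absurd (by rw [hyyB]) hne
  by_contra! hle
  have htangent := hF.apply_lt_of_tangent hyA hyB hx hxA (hy.trans_le hle)
  have hmono := (hF.strictMonoOn_right hx).monotoneOn hy (hy.trans_le hle) hle
  linarith

end PricingFunction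

theorem objective_neg {f a b g DA DB : ℝ} (ha : 0 < a) (hb : 0 < b) (hg : 0 < g)
    (hrate₁ : a ≤ (1 + f) * (g * b)) (hrate₂ : g * b ≤ (1 + f) * a) (hD : DB < -(g * DA)) :
    objective f a b DA DB < 0 := by
  have hfee : 0 < 1 + f := pos_of_mul_pos_left (ha.trans_le hrate₁) (by positivity)
  unfold objective
  split_ifs with hA hB hB
  · nlinarith [mul_pos ha hfee, mul_pos hb hfee]
  · nlinarith
  · nlinarith
  · nlinarith

/-- The no-trading region: if `1/(1+f) ≤ G(yᴬ/yᴮ)/(a/b) ≤ 1+f`, then `(0,0)` is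
the unique optimal solution of the investor's problem: every other feasible
trade has a strictly negative objective value. -/
theorem stmt5 (F Fx Fy : ℝ → ℝ → ℝ) (G G' : ℝ → ℝ)
    (hF : PricingFunction F Fx Fy G G')
    (f : ℝ) (hf : 0 < f) (a b yA yB : ℝ)
    (ha : 0 < a) (hb : 0 < b) (hyA : 0 < yA) (hyB : 0 < yB)
    (hreg₁ : 1 / (1 + f) ≤ G (yA / yB) / (a / b))
    (hreg₂ : G (yA / yB) / (a / b) ≤ 1 + f) :
    ∀ DA DB : ℝ, F (yA - DA) (yB - DB) = F yA yB →
      0 < yA - DA → 0 < yB - DB → (DA, DB) ≠ (0, 0) →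
      objective f a b DA DB < 0 := by
  intro DA DB hlevel hA hB hne
  have hf₁ : 0 < 1 + f := by linarith
  rw [div_div_eq_mul_div, div_le_div_iff₀ hf₁ ha, one_mul] at hreg₁
  rw [div_div_eq_mul_div, div_le_iff₀ ha] at hreg₂
  have hline := hF.lt_of_apply_eq hyA hyB hA hB hlevel (by simpa using hne)
  rw [sub_sub_cancel] at hline
  exact objective_neg ha hb (hF.G_pos (div_pos hyA hyB)) (by linarith) hreg₂ (by linarith)
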